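/- (Stability of pointed rays.) Suppose f : X → Y is a (λ₁,μ₁)-large scale Lipschitz and (λ₂,μ₂)-radial function between δ-hyperbolic geodesic spaces. Then for every x₀ ∈ X there exists a constant H = H(λ₁,μ₁,λ₂,μ₂,δ,x₀) such that: if γ : [0,l] → X is a geodesic with γ(0) = x₀ and γ' is any geodesic in Y from f(x₀) to f(γ(l)), then the Hausdorff distance between f(Im γ) and Im γ' is at most H. -/

import Mathlib

open Filter Metric Set

noncomputable section

namespace Gromov

variable {X : Type*} [MetricSpace X] {Y : Type*} [MetricSpace Y]

/-- The Gromov product `(x,y)_a = (d(x,a)+d(y,a)-d(x,y))/2`. -/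
def gp (a x y : X) : ℝ := (dist x a + dist y a - dist x y) / 2

/-- Gromov `δ`-hyperbolicity via the `δ/4`-inequality. -/
def IsDeltaHyperbolic (X : Type*) [MetricSpace X] (δ : ℝ) : Prop :=
  ∀ x y z w : X, gp w x y ≥ min (gp w x z) (gp w z y) - δ / 4

/-- `γ` is a geodesic starting at `x`, parametrized by arclength on `[0, M]`. -/
def IsGeodesicOn (γ : ℝ → X) (x : X) (M : ℝ) : Prop :=
  γ 0 = x ∧ ∀ s ∈ Icc (0:ℝ) M, ∀ t ∈ Icc (0:ℝ) M, dist (γ s) (γ t) = |s - t|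

/-- Every two points are joined by a geodesic. -/
def IsGeodesicSpace (X : Type*) [MetricSpace X] : Prop :=
  ∀ x y : X, ∃ γ : ℝ → X, IsGeodesicOn γ x (dist x y) ∧ γ (dist x y) = y

/-- An infinite geodesic ray emanating from `x`. -/
def IsRay (γ : ℝ → X) (x : X) : Prop :=
  γ 0 = x ∧ ∀ s ∈ Ici (0:ℝ), ∀ t ∈ Ici (0:ℝ), dist (γ s) (γ t) = |s - t|

/-- `f` is `(l, μ)`-large scale Lipschitz. -/
def IsLSL (f : X → Y) (l μ : ℝ) : Prop :=
  ∀ x y : X, dist (f x) (f y) ≤ l * dist x y + μ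

/-- `f` is large scale Lipschitz. -/
def LSL (f : X → Y) : Prop := ∃ l μ : ℝ, 0 < l ∧ 0 < μ ∧ IsLSL f l μ

/-- The `(l2, μ2)`-radial lower bound condition with respect to `x₀`:
on every finite geodesic emanating from `x₀`, `l2·d(x,y) - μ2 ≤ d(f(x),f(y))`. -/
def IsRadialWith (f : X → Y) (x₀ : X) (l2 μ2 : ℝ) : Prop :=
  ∀ M, 0 ≤ M → ∀ γ : ℝ → X, IsGeodesicOn γ x₀ M →
    ∀ s ∈ Icc (0:ℝ) M, ∀ t ∈ Icc (0:ℝ) M,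
      l2 * dist (γ s) (γ t) - μ2 ≤ dist (f (γ s)) (f (γ t))

/-- `f` is a radial function with respect to `x₀`. -/
def Radial (f : X → Y) (x₀ : X) : Prop :=
  LSL f ∧ ∃ l2 μ2 : ℝ, 0 < l2 ∧ 0 < μ2 ∧ IsRadialWith f x₀ l2 μ2

/-- `f` is visual: for some basepoint `a`, `(x_n,y_n)_a → ∞` implies
`(f(x_n),f(y_n))_{f(a)} → ∞`. -/
def VisualFn (f : X → Y) : Prop :=
  ∃ a : X, ∀ x y : ℕ → X,
    Tendsto (fun n => gp a (x n) (y n)) atTop atTop →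
    Tendsto (fun n => gp (f a) (f (x n)) (f (y n))) atTop atTop

/-- `liminf_{i,j→∞} (x_i,x_j)_a = ∞`: the sequence converges to infinity. -/
def ConvSeq (a : X) (x : ℕ → X) : Prop :=
  Tendsto (fun p : ℕ × ℕ => gp a (x p.1) (x p.2)) atTop atTop

/-- `liminf_{i,j→∞} (x_i,y_j)_a = ∞`: the two sequences are equivalent. -/
def SeqEquiv (a : X) (x y : ℕ → X) : Prop :=
  Tendsto (fun p : ℕ × ℕ => gp a (x p.1) (y p.2)) atTop atTop

def BSeq (a : X) : Type _ := {x : ℕ → X // ConvSeq a x}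

/-- The sequential boundary `∂X` with basepoint `a`. -/
def Boundary (a : X) : Type _ := Quot (fun x y : BSeq a => SeqEquiv a x.1 y.1)

/-- The boundary point represented by a sequence. -/
def bpt (a : X) (x : ℕ → X) (hx : ConvSeq a x) : Boundary a :=
  Quot.mk _ ⟨x, hx⟩

/-- `liminf_{i,j→∞} (x_i,y_j)_a` as an extended real. -/
def gpSeqs (a : X) (x y : ℕ → X) : EReal :=
  liminf (fun p : ℕ × ℕ => ((gp a (x p.1) (y p.2)) : EReal)) atTop

/-- The basic neighborhood `U(p,r)` in the sequential boundary. -/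
def U (a : X) (p : Boundary a) (r : ℝ) : Set (Boundary a) :=
  {q | ∃ (x y : ℕ → X) (hx : ConvSeq a x) (hy : ConvSeq a y),
    bpt a x hx = p ∧ bpt a y hy = q ∧ (r : EReal) ≤ gpSeqs a x y}

instance (a : X) : TopologicalSpace (Boundary a) :=
  TopologicalSpace.generateFrom {s | ∃ p r, 0 < r ∧ s = U a p r}

/-- The union `X ∪ ∂X`. -/
def Comp (a : X) : Type _ := X ⊕ Boundary a

def Comp.inl {a : X} (x : X) : Comp a := Sum.inl x
def Comp.inr {a : X} (p : Boundary a) : Comp a := Sum.inr p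

/-- The extension of `U(p,r)` to `X ∪ ∂X`. -/
def UFull (a : X) (p : Boundary a) (r : ℝ) : Set (Comp a) :=
  {z : X ⊕ Boundary a | Sum.elim
    (fun x : X => ∃ (s : ℕ → X) (hs : ConvSeq a s), bpt a s hs = p ∧
      (r : EReal) ≤ liminf (fun i : ℕ => ((gp a (s i) x) : EReal)) atTop)
    (fun q : Boundary a => q ∈ U a p r) z}

instance (a : X) : TopologicalSpace (Comp a) :=
  TopologicalSpace.generateFrom
    ({s | ∃ u : Set X, IsOpen u ∧ s = Comp.inl '' u} ∪
     {s | ∃ p r, 0 < r ∧ s = UFull a p r})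

/-- The Gromov product of two boundary points:
`(p,q)_a = inf liminf_{i→∞} (x_i,y_i)_a` over representatives. -/
def gpBoundary (a : X) (p q : Boundary a) : EReal :=
  sInf {e : EReal | ∃ (x y : ℕ → X) (hx : ConvSeq a x) (hy : ConvSeq a y),
    bpt a x hx = p ∧ bpt a y hy = q ∧
    e = liminf (fun i : ℕ => ((gp a (x i) (y i)) : EReal)) atTop}

/-- `K^{-e}` for an extended real exponent `e` (with `K^{-∞} = 0`). -/
def negPow (K : ℝ) (e : EReal) : ℝ :=
  if e = ⊤ then 0 else if e = ⊥ then 0 else Real.rpow K (-(e.toReal))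

/-- `d` is a visual metric on `∂X` with parameters `K, C > 1`. -/
def IsVisualMetric (a : X) (d : Boundary a → Boundary a → ℝ) (K C : ℝ) : Prop :=
  1 < K ∧ 1 < C ∧ ∀ p q : Boundary a,
    negPow K (gpBoundary a p q) / C ≤ d p q ∧ d p q ≤ C * negPow K (gpBoundary a p q)

/-- A map between sets with distinguished distance functions is Hölder. -/
def IsHolder {A B : Type*} (dA : A → A → ℝ) (dB : B → B → ℝ) (g : A → B) : Prop :=
  ∃ L α : ℝ, 0 < L ∧ 0 < α ∧ ∀ p q : A, dB (g p) (g q) ≤ L * Real.rpow (dA p q) α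

/-- `(ξ₁,ξ₂)_a = liminf_{t→∞} (ξ₁(t),ξ₂(t))_a` for rays. -/
def gpRays (a : X) (ξ₁ ξ₂ : ℝ → X) : EReal :=
  liminf (fun t : ℝ => ((gp a (ξ₁ t) (ξ₂ t)) : EReal)) atTop

/-- The geodesic ray `ξ` represents the boundary point `p`. -/
def RayRepresents (a : X) (ξ : ℝ → X) (p : Boundary a) : Prop :=
  ∃ h : ConvSeq a (fun n : ℕ => ξ n), bpt a (fun n : ℕ => ξ n) h = p

/-- `(x,ξ)_a = liminf_{n→∞} (x,ξ(n))_a`. -/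
def gpPointRay (a x : X) (ξ : ℝ → X) : ℝ :=
  liminf (fun n : ℕ => gp a x (ξ n)) atTop

/-- `X` is a visual hyperbolic space with basepoint `a` and constant `D`. -/
def IsVisualSpace (a : X) (D : ℝ) : Prop :=
  ∀ x : X, ∃ ξ : ℝ → X, IsRay ξ a ∧ gpPointRay a x ξ > dist x a - D

/-- A maximal finite geodesic from `a`: it admits no proper geodesic extension. -/
def MaximalGeodesic (ζ : ℝ → X) (a : X) (M : ℝ) : Prop :=
  IsGeodesicOn ζ a M ∧
    ¬ ∃ (M' : ℝ) (ζ' : ℝ → X), M < M' ∧ IsGeodesicOn ζ' a M' ∧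
      ∀ t ∈ Icc (0:ℝ) M, ζ' t = ζ t

/-- `f : X → Y` is a radial extension with parameter `A` of `g : ∂X → ∂Y`
(`D` being the visuality constant of `X`). -/
def IsRadialExtension (a : X) (b : Y) (g : Boundary a → Boundary b)
    (A D : ℝ) (f : X → Y) : Prop :=
  f a = b ∧
  ∀ x : X, x ≠ a →
    ((∃ (ξ : ℝ → X) (t : ℝ), IsRay ξ a ∧ 0 ≤ t ∧ ξ t = x) →
      ∃ (ξ : ℝ → X) (t : ℝ) (η : ℝ → Y), IsRay ξ a ∧ 0 ≤ t ∧ ξ t = x ∧ IsRay η b ∧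
        (∃ p : Boundary a, RayRepresents a ξ p ∧ RayRepresents b η (g p)) ∧
        f x = η (A * t)) ∧
    ((¬ ∃ (ξ : ℝ → X) (t : ℝ), IsRay ξ a ∧ 0 ≤ t ∧ ξ t = x) →
      ∃ (M t : ℝ) (ζ ξ : ℝ → X) (η : ℝ → Y),
        MaximalGeodesic ζ a M ∧ t ∈ Icc (0:ℝ) M ∧ ζ t = x ∧
        IsRay ξ a ∧ gpPointRay a (ζ M) ξ > dist (ζ M) a - D ∧ IsRay η b ∧
        (∃ p : Boundary a, RayRepresents a ξ p ∧ RayRepresents b η (g p)) ∧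
        f x = η (A * t))

/-- `f` is coarsely surjective. -/
def CoarselySurjective (f : X → Y) : Prop :=
  ∃ S : ℝ, 0 < S ∧ ∀ y : Y, ∃ x : X, dist y (f x) ≤ S

/-- `f` is bornologous (coarse). -/
def Bornologous (f : X → Y) : Prop :=
  ∀ R : ℝ, 0 < R → ∃ S : ℝ, 0 < S ∧ ∀ x x' : X, dist x x' ≤ R → dist (f x) (f x') ≤ S

/-- `f` is a coarse embedding. -/
def CoarseEmbedding (f : X → Y) : Prop :=
  Bornologous f ∧
    ∀ R : ℝ, 0 < R → ∃ S : ℝ, 0 < S ∧ ∀ x x' : X, dist (f x) (f x') ≤ R → dist x x' ≤ S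

/-- `f` is coarsely `n`-to-1. -/
def CoarselyNto1 (f : X → Y) (n : ℕ) : Prop :=
  ∀ R : ℝ, 0 < R → ∃ S : ℝ, 0 < S ∧ ∀ A : Set Y, EMetric.diam A < ENNReal.ofReal R →
    ∃ B : Fin n → Set X, (f ⁻¹' A = ⋃ i, B i) ∧
      ∀ i, EMetric.diam (B i) < ENNReal.ofReal S

/-- `g : ∂X → ∂Y` is the boundary map induced by `f`, i.e. `g [(x_n)] = [(f(x_n))]`. -/
def InducedBoundaryMap (a : X) (f : X → Y) (g : Boundary a → Boundary (f a)) : Prop :=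
  ∀ (x : ℕ → X) (hx : ConvSeq a x) (hfx : ConvSeq (f a) (f ∘ x)),
    g (bpt a x hx) = bpt (f a) (f ∘ x) hfx

/-- `g` is (at most) `n`-to-1. -/
def NTo1 {A B : Type*} (g : A → B) (n : ℕ) : Prop :=
  ∀ b : B, ∃ s : Finset A, s.card ≤ n ∧ ∀ a : A, g a = b → a ∈ s

/-- Covering dimension at most `n`: every open cover admits an open refinement
of multiplicity at most `n+1`. -/
def CovDimLE (Z : Type*) [TopologicalSpace Z] (n : ℕ) : Prop :=
  ∀ 𝒰 : Set (Set Z), (∀ u ∈ 𝒰, IsOpen u) → ⋃₀ 𝒰 = univ →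
    ∃ 𝒱 : Set (Set Z), (∀ v ∈ 𝒱, IsOpen v) ∧ ⋃₀ 𝒱 = univ ∧
      (∀ v ∈ 𝒱, ∃ u ∈ 𝒰, v ⊆ u) ∧
      ∀ z : Z, {v ∈ 𝒱 | z ∈ v}.Finite ∧ {v ∈ 𝒱 | z ∈ v}.ncard ≤ n + 1

/-- `c_{f,n}(r)`: the supremum of numbers `B` such that there exist `n+1` points
with mutual Gromov products `< r` whose images have mutual Gromov products `≥ B`. -/
def cfn (a : X) (b : Y) (f : X → Y) (n : ℕ) (r : ℝ) : EReal :=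
  sSup {e : EReal | ∃ (B : ℝ) (x : Fin (n + 1) → X), e = (B : EReal) ∧
    (∀ i j, i ≠ j → gp a (x i) (x j) < r) ∧
    (∀ i j, i ≠ j → B ≤ gp b (f (x i)) (f (x j)))}

/-!
Changing the basepoint of the radial condition from `c` to `x₀` costs only an additive constant:
a point `x` between `x₀` and `y` is, up to `δ`, on a geodesic from `c` to `y` or on one from `x₀`
to `c`. So `f ∘ γ` is a quasi-geodesic starting at `f x₀`, and sampled at integer times it is a
quasi-geodesic chain; the theorem becomes the stability of quasi-geodesic chains in `Y`.

For the stability, let `w` be a point of the geodesic farthest from the chain, at distance `ρ`.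
Anchors at distance `2ρ` on either side of `w` lie within `ρ` of the chain, so the piece of chain
between them has `O(ρ)` steps, all at distance at least `ρ` from `w`. Halving repeatedly, the
Gromov product at `w` of the two anchors is at least `ρ - O(log ρ)`; it vanishes because `w` lies
between them, so `ρ` is bounded. Conversely, by the intermediate value theorem some point of the
geodesic is close both to the chain before and to the chain after a given index, and the
quasi-geodesic lower bound forces these two chain points, hence the given one, to be close.
-/

section GromovProduct

variable {Z : Type*} [MetricSpace Z] {δ : ℝ}

lemma gp_comm (w x y : Z) : gp w x y = gp w y x := by
  unfold gp; rw [dist_comm x y]; ring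

lemma gp_self (w x : Z) : gp w x x = dist x w := by
  simp [gp]

lemma gp_nonneg (w x y : Z) : 0 ≤ gp w x y := by
  have := dist_triangle_right x y w
  unfold gp; linarith

lemma sub_half_le_gp {w x y : Z} {r b : ℝ} (hx : r ≤ dist x w) (hy : r ≤ dist y w)
    (hxy : dist x y ≤ b) : r - b / 2 ≤ gp w x y := by
  unfold gp; linarith

lemma gp_add_gp (c x y : Z) : gp x c y + gp c x y = dist c x := by
  unfold gp; rw [dist_comm x c, dist_comm y x, dist_comm y c]; ring

lemma IsDeltaHyperbolic.nonneg (hZ : IsDeltaHyperbolic Z δ) (z : Z) : 0 ≤ δ := by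
  have := hZ z z z z
  simp only [gp, dist_self, min_self] at this
  linarith

lemma IsDeltaHyperbolic.sub_le_gp (hZ : IsDeltaHyperbolic Z δ) {w x y z : Z} {r : ℝ}
    (hxz : r ≤ gp w x z) (hzy : r ≤ gp w z y) : r - δ / 4 ≤ gp w x y := by
  have := hZ x y z w
  have : r ≤ min (gp w x z) (gp w z y) := le_min hxz hzy
  linarith

end GromovProduct

section Geodesic

variable {Z : Type*} [MetricSpace Z] {σ : ℝ → Z} {x : Z} {D : ℝ}

lemma IsGeodesicOn.dist_left (hσ : IsGeodesicOn σ x D) {t : ℝ} (ht : t ∈ Icc 0 D) :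
    dist x (σ t) = t := by
  rw [← hσ.1, hσ.2 0 ⟨le_rfl, ht.1.trans ht.2⟩ t ht, zero_sub, abs_neg, abs_of_nonneg ht.1]

lemma IsGeodesicOn.dist_of_le (hσ : IsGeodesicOn σ x D) {s t : ℝ} (hs : s ∈ Icc 0 D)
    (ht : t ∈ Icc 0 D) (hst : s ≤ t) : dist (σ s) (σ t) = t - s := by
  rw [hσ.2 s hs t ht, abs_of_nonpos (by linarith)]; ring

lemma IsGeodesicOn.continuousOn (hσ : IsGeodesicOn σ x D) : ContinuousOn σ (Icc 0 D) :=
  (LipschitzOnWith.of_dist_le_mul (K := 1) fun s hs t ht => by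
    rw [hσ.2 s hs t ht, Real.dist_eq, NNReal.coe_one, one_mul]).continuousOn

lemma IsGeodesicOn.gp_eq_zero (hσ : IsGeodesicOn σ x D) {s t u : ℝ} (hs : s ∈ Icc 0 D)
    (ht : t ∈ Icc 0 D) (hu : u ∈ Icc 0 D) (hst : s ≤ t) (htu : t ≤ u) :
    gp (σ t) (σ s) (σ u) = 0 := by
  unfold gp
  rw [dist_comm (σ u) (σ t), hσ.dist_of_le hs ht hst, hσ.dist_of_le ht hu htu,
    hσ.dist_of_le hs hu (hst.trans htu)]
  ring

end Geodesic

section Numerics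

lemma exists_two_pow_between {x : ℝ} (hx : 0 ≤ x) :
    ∃ m : ℕ, x ≤ 2 ^ m ∧ (2 : ℝ) ^ m ≤ 2 * x + 1 := by
  set n := ⌈x⌉₊
  refine ⟨Nat.clog 2 n, (Nat.le_ceil x).trans (by exact_mod_cast Nat.le_pow_clog one_lt_two n), ?_⟩
  have hxn := Nat.ceil_lt_add_one hx
  rcases le_or_gt n 1 with hn | hn
  · rw [Nat.clog_of_right_le_one hn, pow_zero]; linarith
  · have hlt : (2 : ℝ) ^ (Nat.clog 2 n).pred + 1 ≤ n := by
      exact_mod_cast Nat.pow_pred_clog_lt_self one_lt_two hn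
    rw [← Nat.succ_pred_eq_of_pos (Nat.clog_pos one_lt_two hn), pow_succ]
    linarith

lemma exists_forall_two_pow_le_imp_le (E F : ℝ) :
    ∃ M : ℕ, ∀ m : ℕ, (2 : ℝ) ^ m ≤ E + F * m → m ≤ M := by
  have h : Tendsto (fun n : ℕ => E * ((n : ℝ) ^ 0 / 2 ^ n) + F * ((n : ℝ) ^ 1 / 2 ^ n))
      atTop (nhds 0) := by
    simpa using ((tendsto_pow_const_div_const_pow_of_one_lt 0 one_lt_two).const_mul E).add
      ((tendsto_pow_const_div_const_pow_of_one_lt 1 one_lt_two).const_mul F)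
  obtain ⟨M, hM⟩ := eventually_atTop.mp (h.eventually (gt_mem_nhds one_pos))
  refine ⟨M, fun m hm => ?_⟩
  by_contra! hlt
  have hsmall := hM m hlt.le
  rw [show E * ((m : ℝ) ^ 0 / 2 ^ m) + F * ((m : ℝ) ^ 1 / 2 ^ m) = (E + F * m) / 2 ^ m by ring,
    div_lt_one (by positivity)] at hsmall
  linarith

/-- A bound `ρ ≤ A + B log₂ x` with `x ≤ C ρ + E`, the logarithm being encoded through powers of
two, bounds `ρ`. -/
lemma exists_bound_of_le_add_mul_log_two (A B C E : ℝ) (hC : 0 ≤ C) :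
    ∃ R, ∀ ρ x : ℝ, 0 ≤ x → x ≤ C * ρ + E → (∀ m : ℕ, x ≤ 2 ^ m → ρ ≤ A + B * m) → ρ ≤ R := by
  obtain ⟨M, hM⟩ := exists_forall_two_pow_le_imp_le (2 * (C * A + E) + 1) (2 * C * B)
  refine ⟨A + |B| * M, fun ρ x hx hxρ hρ => ?_⟩
  obtain ⟨m, hxm, hm⟩ := exists_two_pow_between hx
  have hρm := hρ m hxm
  have hmM : m ≤ M := hM m (by nlinarith [mul_le_mul_of_nonneg_left hρm hC])
  calc ρ ≤ A + B * m := hρm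
    _ ≤ A + |B| * M := by
      have hmM' : (m : ℝ) ≤ M := by exact_mod_cast hmM
      linarith [(mul_le_mul_of_nonneg_right (le_abs_self B) (Nat.cast_nonneg m)).trans
        (mul_le_mul_of_nonneg_left hmM' (abs_nonneg B))]

end Numerics

section Chains

variable {Z : Type*} [MetricSpace Z] {δ : ℝ}

structure IsQuasiGeodesicChain (y : ℕ → Z) (N : ℕ) (b l c : ℝ) : Prop where
  dist_succ_le : ∀ i < N, dist (y i) (y (i + 1)) ≤ b
  le_dist : ∀ i ≤ N, ∀ j ≤ N, l * |(i : ℝ) - j| - c ≤ dist (y i) (y j)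

lemma dist_le_mul_of_dist_succ_le {y : ℕ → Z} {N : ℕ} {b : ℝ}
    (hstep : ∀ i < N, dist (y i) (y (i + 1)) ≤ b) {i j : ℕ} (hij : i ≤ j) (hj : j ≤ N) :
    dist (y i) (y j) ≤ b * (j - i) := by
  calc dist (y i) (y j) ≤ ∑ k ∈ Finset.Ico i j, dist (y k) (y (k + 1)) := dist_le_Ico_sum_dist y hij
    _ ≤ (Finset.Ico i j).card • b :=
      Finset.sum_le_card_nsmul _ _ _ fun k hk => hstep k (by simp at hk; omega)
    _ = b * (j - i) := by rw [Nat.card_Ico, nsmul_eq_mul, Nat.cast_sub hij, mul_comm]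

lemma IsDeltaHyperbolic.le_gp_of_chain_add (hZ : IsDeltaHyperbolic Z δ) {w : Z} {y : ℕ → Z}
    {N : ℕ} {ρ b : ℝ} (hb : 0 ≤ b) (hstep : ∀ i < N, dist (y i) (y (i + 1)) ≤ b)
    (hfar : ∀ i ≤ N, ρ ≤ dist (y i) w) (m : ℕ) :
    ∀ i n, n ≤ 2 ^ m → i + n ≤ N → ρ - b / 2 - m * (δ / 4) ≤ gp w (y i) (y (i + n)) := by
  induction m with
  | zero =>
    intro i n hn hiN
    rcases Nat.le_one_iff_eq_zero_or_eq_one.mp (by simpa using hn) with rfl | rfl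
    · rw [add_zero, gp_self]
      linarith [hfar i (by omega)]
    · simpa using sub_half_le_gp (hfar i (by omega)) (hfar (i + 1) hiN) (hstep i (by omega))
  | succ m ih =>
    intro i n hn hiN
    rw [pow_succ] at hn
    have h₁ := ih i (n / 2) (by omega) (by omega)
    have h₂ := ih (i + n / 2) (n - n / 2) (by omega) (by omega)
    rw [show i + n / 2 + (n - n / 2) = i + n by omega] at h₂
    have := hZ.sub_le_gp h₁ h₂
    push_cast
    linarith

lemma IsDeltaHyperbolic.le_gp_of_chain (hZ : IsDeltaHyperbolic Z δ) {w : Z} {y : ℕ → Z}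
    {N : ℕ} {ρ b : ℝ} (hb : 0 ≤ b) (hstep : ∀ i < N, dist (y i) (y (i + 1)) ≤ b)
    (hfar : ∀ i ≤ N, ρ ≤ dist (y i) w) (m : ℕ) {i j : ℕ} (hi : i ≤ N) (hj : j ≤ N)
    (hij : |(i : ℝ) - j| ≤ 2 ^ m) : ρ - b / 2 - m * (δ / 4) ≤ gp w (y i) (y j) := by
  rcases le_total i j with h | h
  · obtain ⟨n, rfl⟩ := Nat.exists_eq_add_of_le h
    refine hZ.le_gp_of_chain_add hb hstep hfar m i n ?_ hj
    rw [Nat.cast_add, sub_add_cancel_left, abs_neg, Nat.abs_cast] at hij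
    exact_mod_cast hij
  · obtain ⟨n, rfl⟩ := Nat.exists_eq_add_of_le h
    rw [gp_comm]
    refine hZ.le_gp_of_chain_add hb hstep hfar m j n ?_ hi
    rw [Nat.cast_add, add_sub_cancel_left, Nat.abs_cast] at hij
    exact_mod_cast hij

end Chains

section Morse

variable {Z : Type*} [MetricSpace Z] {δ : ℝ} {y : ℕ → Z} {N : ℕ} {σ : ℝ → Z} {D t₀ ρ : ℝ}

lemma le_gp_of_anchor {w a p : Z} (hap : dist a p ≤ ρ) (hpw : ρ ≤ dist p w)
    (haw : 2 * ρ ≤ dist a w ∨ a = p) : ρ ≤ gp w a p := by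
  rcases haw with h | rfl
  · unfold gp; linarith
  · rwa [gp_self]

lemma exists_anchor_left (hσ : IsGeodesicOn σ (y 0) D) (ht₀ : t₀ ∈ Icc 0 D) (hρ : 0 ≤ ρ)
    (hnear : ∀ t ∈ Icc 0 D, ∃ i ≤ N, dist (σ t) (y i) ≤ ρ)
    (hfar : ∀ i ≤ N, ρ ≤ dist (y i) (σ t₀)) : ∃ a ∈ Icc 0 D, a ≤ t₀ ∧ t₀ - a ≤ 2 * ρ ∧
    ∃ i ≤ N, dist (σ a) (y i) ≤ ρ ∧ ρ ≤ gp (σ t₀) (σ a) (y i) := by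
  by_cases h : 2 * ρ ≤ t₀
  · have ha : t₀ - 2 * ρ ∈ Icc 0 D := ⟨by linarith, by linarith [ht₀.2]⟩
    obtain ⟨i, hi, hai⟩ := hnear _ ha
    refine ⟨_, ha, by linarith, by linarith, i, hi, hai,
      le_gp_of_anchor hai (hfar i hi) (Or.inl ?_)⟩
    rw [hσ.dist_of_le ha ht₀ (by linarith)]
    linarith
  · have hy₀ : dist (σ 0) (y 0) ≤ ρ := by rwa [hσ.1, dist_self]
    exact ⟨0, ⟨le_rfl, ht₀.1.trans ht₀.2⟩, ht₀.1, by linarith, 0, Nat.zero_le N, hy₀,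
      le_gp_of_anchor hy₀ (hfar 0 (Nat.zero_le N)) (Or.inr hσ.1)⟩

lemma exists_anchor_right (hσ : IsGeodesicOn σ (y 0) D) (hσD : σ D = y N) (ht₀ : t₀ ∈ Icc 0 D)
    (hρ : 0 ≤ ρ) (hnear : ∀ t ∈ Icc 0 D, ∃ i ≤ N, dist (σ t) (y i) ≤ ρ)
    (hfar : ∀ i ≤ N, ρ ≤ dist (y i) (σ t₀)) : ∃ a ∈ Icc 0 D, t₀ ≤ a ∧ a - t₀ ≤ 2 * ρ ∧
    ∃ j ≤ N, dist (σ a) (y j) ≤ ρ ∧ ρ ≤ gp (σ t₀) (σ a) (y j) := by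
  by_cases h : t₀ + 2 * ρ ≤ D
  · have ha : t₀ + 2 * ρ ∈ Icc 0 D := ⟨by linarith [ht₀.1], h⟩
    obtain ⟨j, hj, haj⟩ := hnear _ ha
    refine ⟨_, ha, by linarith, by linarith, j, hj, haj,
      le_gp_of_anchor haj (hfar j hj) (Or.inl ?_)⟩
    rw [dist_comm, hσ.dist_of_le ht₀ ha (by linarith)]
    linarith
  · have hyN : dist (σ D) (y N) ≤ ρ := by rwa [hσD, dist_self]
    exact ⟨D, ⟨ht₀.1.trans ht₀.2, le_rfl⟩, ht₀.2, by linarith, N, le_rfl, hyN,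
      le_gp_of_anchor hyN (hfar N le_rfl) (Or.inr hσD)⟩

lemma IsDeltaHyperbolic.exists_index_of_farthest (hZ : IsDeltaHyperbolic Z δ) {b : ℝ}
    (hb : 0 ≤ b) (hstep : ∀ i < N, dist (y i) (y (i + 1)) ≤ b) (hσ : IsGeodesicOn σ (y 0) D)
    (hσD : σ D = y N) (ht₀ : t₀ ∈ Icc 0 D) (hρ : 0 ≤ ρ)
    (hnear : ∀ t ∈ Icc 0 D, ∃ i ≤ N, dist (σ t) (y i) ≤ ρ) (hfar : ∀ i ≤ N, ρ ≤ dist (y i) (σ t₀)) :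
    ∃ i ≤ N, ∃ j ≤ N, dist (y i) (y j) ≤ 6 * ρ ∧
      ∀ m : ℕ, |(i : ℝ) - j| ≤ 2 ^ m → ρ ≤ b / 2 + δ / 2 + δ / 4 * m := by
  obtain ⟨a, ha, hat₀, hta, i, hi, hai, hgpa⟩ := exists_anchor_left hσ ht₀ hρ hnear hfar
  obtain ⟨c, hc, hct₀, htc, j, hj, hcj, hgpc⟩ := exists_anchor_right hσ hσD ht₀ hρ hnear hfar
  refine ⟨i, hi, j, hj, ?_, fun m hm => ?_⟩
  · have hac := hσ.dist_of_le ha hc (hat₀.trans hct₀)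
    linarith [dist_triangle4 (y i) (σ a) (σ c) (y j), dist_comm (y i) (σ a)]
  · have hδ := hZ.nonneg (y 0)
    have hchain := hZ.le_gp_of_chain hb hstep hfar m hi hj hm
    have hmδ : 0 ≤ m * (δ / 4) := by positivity
    rw [gp_comm] at hgpc
    have h₁ := hZ.sub_le_gp hchain (hgpc.trans' (by linarith))
    have h₂ := hZ.sub_le_gp (hgpa.trans' (by linarith)) h₁
    rw [hσ.gp_eq_zero ha ht₀ hc hat₀ hct₀] at h₂
    linarith

end Morse

section Stability

variable {Z : Type*} [MetricSpace Z] {δ : ℝ}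

theorem IsDeltaHyperbolic.exists_geodesic_near_chain (hZ : IsDeltaHyperbolic Z δ) {b l c : ℝ}
    (hb : 0 ≤ b) (hl : 0 < l) :
    ∃ R, 0 ≤ R ∧ ∀ (N : ℕ) (y : ℕ → Z) (D : ℝ) (σ : ℝ → Z), IsQuasiGeodesicChain y N b l c →
      IsGeodesicOn σ (y 0) D → σ D = y N → ∀ t ∈ Icc 0 D, ∃ i ≤ N, dist (σ t) (y i) ≤ R := by
  obtain ⟨R, hR⟩ :=
    exists_bound_of_le_add_mul_log_two (b / 2 + δ / 2) (δ / 4) (6 / l) (c / l) (by positivity)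
  refine ⟨max R 0, le_max_right _ _, fun N y D σ hy hσ hσD t ht => ?_⟩
  set C := y '' Iic N
  have hC : IsCompact C := ((finite_Iic N).image y).isCompact
  have hCne : C.Nonempty := ⟨y 0, 0, Nat.zero_le N, rfl⟩
  obtain ⟨t₀, ht₀, hmax⟩ := isCompact_Icc.exists_isMaxOn ⟨t, ht⟩
    ((continuous_infDist_pt C).comp_continuousOn hσ.continuousOn)
  set ρ := infDist (σ t₀) C
  have hnear : ∀ t ∈ Icc 0 D, ∃ i ≤ N, dist (σ t) (y i) ≤ ρ := by
    intro t ht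
    obtain ⟨_, ⟨i, hi, rfl⟩, hti⟩ := hC.exists_infDist_eq_dist hCne (σ t)
    exact ⟨i, hi, hti ▸ hmax ht⟩
  have hfar : ∀ i ≤ N, ρ ≤ dist (y i) (σ t₀) := fun i hi =>
    dist_comm (σ t₀) (y i) ▸ infDist_le_dist_of_mem ⟨i, hi, rfl⟩
  obtain ⟨i, hi, j, hj, hij, hlog⟩ :=
    hZ.exists_index_of_farthest hb hy.dist_succ_le hσ hσD ht₀ infDist_nonneg hnear hfar
  have hij' : |(i : ℝ) - j| ≤ 6 / l * ρ + c / l := by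
    rw [div_mul_eq_mul_div, ← add_div, le_div_iff₀ hl]
    linarith [hy.le_dist i hi j hj]
  have hρR : ρ ≤ R := hR ρ _ (abs_nonneg _) hij' fun m hm => (hlog m hm).trans_eq (by ring)
  obtain ⟨k, hk, htk⟩ := hnear t ht
  exact ⟨k, hk, htk.trans (hρR.trans (le_max_left _ _))⟩

lemma exists_near_both_sides {y : ℕ → Z} {N : ℕ} {σ : ℝ → Z} {D R : ℝ}
    (hσ : ContinuousOn σ (Icc 0 D)) (hD : 0 ≤ D) (hσ0 : σ 0 = y 0) (hσD : σ D = y N)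
    (hnear : ∀ t ∈ Icc 0 D, ∃ i ≤ N, dist (σ t) (y i) ≤ R) {k : ℕ} (hk : k ≤ N) :
    ∃ t ∈ Icc 0 D, ∃ i ≤ k, ∃ j, k ≤ j ∧ j ≤ N ∧ dist (σ t) (y i) ≤ R ∧ dist (σ t) (y j) ≤ R := by
  set A := y '' Iic k
  set B := y '' Icc k N
  have hA : IsCompact A := ((finite_Iic k).image y).isCompact
  have hB : IsCompact B := ((finite_Icc k N).image y).isCompact
  have hAne : A.Nonempty := ⟨y 0, 0, Nat.zero_le k, rfl⟩
  have hBne : B.Nonempty := ⟨y N, N, ⟨hk, le_rfl⟩, rfl⟩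
  have hcont : ContinuousOn (fun t => infDist (σ t) A - infDist (σ t) B) (Icc 0 D) :=
    ((continuous_infDist_pt A).comp_continuousOn hσ).sub
      ((continuous_infDist_pt B).comp_continuousOn hσ)
  have h0 : infDist (σ 0) A = 0 :=
    infDist_zero_of_mem (hσ0 ▸ mem_image_of_mem y (show 0 ∈ Iic k from Nat.zero_le k))
  have hD' : infDist (σ D) B = 0 :=
    infDist_zero_of_mem (hσD ▸ mem_image_of_mem y (show N ∈ Icc k N from ⟨hk, le_rfl⟩))
  obtain ⟨t, ht, hAB⟩ := intermediate_value_Icc hD hcont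
    ⟨by simp only [h0]; linarith [infDist_nonneg (x := σ 0) (s := B)],
      by simp only [hD']; linarith [infDist_nonneg (x := σ D) (s := A)]⟩
  have hAB' : infDist (σ t) A = infDist (σ t) B := by linarith
  have hle : infDist (σ t) A ≤ R := by
    obtain ⟨i, hi, hti⟩ := hnear t ht
    rcases le_total i k with hik | hki
    · exact (infDist_le_dist_of_mem (mem_image_of_mem y (show i ∈ Iic k from hik))).trans hti
    · exact hAB' ▸
        (infDist_le_dist_of_mem (mem_image_of_mem y (show i ∈ Icc k N from ⟨hki, hi⟩))).trans hti
  obtain ⟨_, ⟨i, hi, rfl⟩, hti⟩ := hA.exists_infDist_eq_dist hAne (σ t)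
  obtain ⟨_, ⟨j, hj, rfl⟩, htj⟩ := hB.exists_infDist_eq_dist hBne (σ t)
  exact ⟨t, ht, i, hi, j, hj.1, hj.2, hti ▸ hle, htj ▸ hAB' ▸ hle⟩

lemma IsQuasiGeodesicChain.exists_near_geodesic {y : ℕ → Z} {N : ℕ} {b l c : ℝ}
    (hy : IsQuasiGeodesicChain y N b l c) (hb : 0 ≤ b) (hl : 0 < l) {σ : ℝ → Z} {D R : ℝ}
    (hσ : ContinuousOn σ (Icc 0 D)) (hD : 0 ≤ D) (hσ0 : σ 0 = y 0) (hσD : σ D = y N)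
    (hnear : ∀ t ∈ Icc 0 D, ∃ i ≤ N, dist (σ t) (y i) ≤ R) {k : ℕ} (hk : k ≤ N) :
    ∃ t ∈ Icc 0 D, dist (y k) (σ t) ≤ R + b * ((2 * R + c) / l) := by
  obtain ⟨t, ht, i, hik, j, hkj, hjN, hti, htj⟩ :=
    exists_near_both_sides hσ hD hσ0 hσD hnear hk
  have hji : (j : ℝ) - i ≤ (2 * R + c) / l := by
    rw [le_div_iff₀ hl]
    have := hy.le_dist i (hik.trans hk) j hjN
    rw [abs_sub_comm, abs_of_nonneg (sub_nonneg.mpr (by exact_mod_cast hik.trans hkj))] at this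
    linarith [dist_triangle_left (y i) (y j) (σ t)]
  have hki : dist (y i) (y k) ≤ b * ((2 * R + c) / l) := by
    refine (dist_le_mul_of_dist_succ_le hy.dist_succ_le hik hk).trans ?_
    gcongr
    linarith [show (k : ℝ) ≤ j by exact_mod_cast hkj]
  refine ⟨t, ht, ?_⟩
  linarith [dist_triangle_left (y k) (σ t) (y i), dist_comm (σ t) (y i)]

theorem IsDeltaHyperbolic.exists_chain_geodesic_near (hZ : IsDeltaHyperbolic Z δ) {b l c : ℝ}
    (hb : 0 ≤ b) (hl : 0 < l) (hc : 0 ≤ c) :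
    ∃ H, 0 ≤ H ∧ ∀ (N : ℕ) (y : ℕ → Z) (D : ℝ) (σ : ℝ → Z), IsQuasiGeodesicChain y N b l c →
      0 ≤ D → IsGeodesicOn σ (y 0) D → σ D = y N →
      (∀ t ∈ Icc 0 D, ∃ i ≤ N, dist (σ t) (y i) ≤ H) ∧
        ∀ k ≤ N, ∃ t ∈ Icc 0 D, dist (y k) (σ t) ≤ H := by
  obtain ⟨R, hR, hmorse⟩ := hZ.exists_geodesic_near_chain (c := c) hb hl
  have hH : 0 ≤ b * ((2 * R + c) / l) := by positivity
  refine ⟨R + b * ((2 * R + c) / l), by positivity, fun N y D σ hy hD hσ hσD =>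
    ⟨fun t ht => ?_, fun k hk =>
      hy.exists_near_geodesic hb hl hσ.continuousOn hD hσ.1 hσD (hmorse N y D σ hy hσ hσD) hk⟩⟩
  obtain ⟨i, hi, hti⟩ := hmorse N y D σ hy hσ hσD t ht
  exact ⟨i, hi, by linarith⟩

end Stability

section Radial

variable {X : Type*} [MetricSpace X] {Y : Type*} [MetricSpace Y] {δ : ℝ}

lemma IsDeltaHyperbolic.dist_le_of_isGeodesicOn (hX : IsDeltaHyperbolic X δ) {β : ℝ → X}
    {c x y : X} {D : ℝ} (hβ : IsGeodesicOn β c D) (hβD : β D = y) (hx : dist c x ≤ D) :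
    dist x (β (dist c x)) ≤ 2 * gp x c y + δ / 2 := by
  set x' := β (dist c x)
  have hD : 0 ≤ D := dist_nonneg.trans hx
  have hmem : dist c x ∈ Icc 0 D := ⟨dist_nonneg, hx⟩
  have hcy : dist c y = D := hβD ▸ hβ.dist_left ⟨hD, le_rfl⟩
  have hcx' : dist c x' = dist c x := hβ.dist_left hmem
  have hx'y : dist x' y = D - dist c x := hβD ▸ hβ.dist_of_le hmem ⟨hD, le_rfl⟩ hx
  have hyx' : gp c y x' = dist c x := by
    unfold gp; rw [dist_comm y c, hcy, dist_comm x' c, hcx', dist_comm y x', hx'y]; ring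
  have hxx' : gp c x x' = dist c x - dist x x' / 2 := by
    unfold gp; rw [dist_comm x c, dist_comm x' c, hcx']; ring
  have h := hX x x' y c
  rw [hyx', hxx', min_eq_left (by linarith [gp_add_gp c x y, gp_nonneg x c y])] at h
  linarith [gp_add_gp c x y]

variable {f : X → Y} {c : X} {l1 μ1 l2 μ2 : ℝ}

lemma IsRadialWith.sub_le_dist_basepoint (hrad : IsRadialWith f c l2 μ2)
    (hgX : IsGeodesicSpace X) (y : X) : l2 * dist c y - μ2 ≤ dist (f c) (f y) := by
  obtain ⟨β, hβ, hβy⟩ := hgX c y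
  have hD : (0 : ℝ) ≤ dist c y := dist_nonneg
  have := hrad _ hD β hβ 0 ⟨le_rfl, hD⟩ _ ⟨hD, le_rfl⟩
  rwa [hβ.1, hβy] at this

lemma IsRadialWith.sub_le_dist_of_gp_le (hrad : IsRadialWith f c l2 μ2)
    (hX : IsDeltaHyperbolic X δ) (hgX : IsGeodesicSpace X) (hf : IsLSL f l1 μ1) (hl1 : 0 ≤ l1)
    (hl2 : 0 ≤ l2) (hμ1 : 0 ≤ μ1) (hμ2 : 0 ≤ μ2) {x y : X} (hxy : gp x c y ≤ δ / 4) :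
    l2 * dist x y - (l1 * δ + l2 * δ + μ1 + μ2) ≤ dist (f x) (f y) := by
  have hδ := hX.nonneg x
  have hcxy : dist c x + dist x y - dist c y ≤ δ / 2 := by
    unfold gp at hxy; rw [dist_comm y x] at hxy; linarith
  by_cases hx : dist c x ≤ dist c y
  · obtain ⟨β, hβ, hβy⟩ := hgX c y
    set x' := β (dist c x)
    have hD : (0 : ℝ) ≤ dist c y := dist_nonneg
    have hmem : dist c x ∈ Icc 0 (dist c y) := ⟨dist_nonneg, hx⟩
    have hxx' : dist x x' ≤ δ := by
      linarith [hX.dist_le_of_isGeodesicOn hβ hβy hx]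
    have hx'y : dist x' y = dist c y - dist c x := by
      have := hβ.dist_of_le hmem ⟨hD, le_rfl⟩ hx
      rwa [hβy] at this
    have hrad' := hrad _ hD β hβ _ hmem _ ⟨hD, le_rfl⟩
    rw [hβy, hx'y] at hrad'
    have h₁ : l2 * (dist x y - δ / 2) ≤ l2 * (dist c y - dist c x) :=
      mul_le_mul_of_nonneg_left (by linarith) hl2
    have h₂ : l1 * dist x x' ≤ l1 * δ := by gcongr
    linarith [hf x x', dist_triangle (f x') (f x) (f y), dist_comm (f x') (f x),
      mul_nonneg hl2 hδ]
  · have h : l2 * dist x y ≤ l2 * δ := by gcongr; linarith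
    linarith [mul_nonneg hl1 hδ, dist_nonneg (x := f x) (y := f y)]

lemma IsRadialWith.sub_le_dist_of_gp_basepoint_le (hrad : IsRadialWith f c l2 μ2)
    (hX : IsDeltaHyperbolic X δ) (hgX : IsGeodesicSpace X) (hf : IsLSL f l1 μ1) (hl1 : 0 ≤ l1)
    (hl2 : 0 ≤ l2) {x₀ x y : X} (hx : gp x x₀ y = 0) (hxc : gp x x₀ c ≤ δ / 4) :
    l2 * dist x y - ((l1 + l2) * dist c x₀ + l1 * δ + μ1 + μ2) ≤ dist (f x) (f y) := by
  have hδ := hX.nonneg x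
  unfold gp at hx hxc
  have h₁ : l2 * (dist x₀ x + dist x y - dist c x₀) ≤ l2 * dist c y := by
    gcongr; linarith [dist_triangle x₀ c y, dist_comm x₀ c, dist_comm y x]
  have h₂ : l1 * dist c x ≤ l1 * (dist c x₀ - dist x₀ x + δ / 2) := by
    gcongr; linarith [dist_comm x₀ c]
  linarith [hrad.sub_le_dist_basepoint hgX y, hf c x, dist_triangle (f c) (f x) (f y),
    mul_nonneg hl1 (dist_nonneg (x := x₀) (y := x)),
    mul_nonneg hl2 (dist_nonneg (x := x₀) (y := x)), mul_nonneg hl1 hδ]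

lemma IsRadialWith.change_basepoint (hrad : IsRadialWith f c l2 μ2)
    (hX : IsDeltaHyperbolic X δ) (hgX : IsGeodesicSpace X) (hf : IsLSL f l1 μ1) (hl1 : 0 ≤ l1)
    (hl2 : 0 ≤ l2) (hμ1 : 0 ≤ μ1) (hμ2 : 0 ≤ μ2) (x₀ : X) :
    IsRadialWith f x₀ l2 ((l1 + l2) * (dist c x₀ + δ) + μ1 + μ2) := by
  have hδ := hX.nonneg x₀
  have key : ∀ {x y : X}, gp x x₀ y = 0 →
      l2 * dist x y - ((l1 + l2) * (dist c x₀ + δ) + μ1 + μ2) ≤ dist (f x) (f y) := by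
    intro x y hx
    have := hX x₀ y c x
    rw [hx] at this
    rcases min_le_iff.mp (show min (gp x x₀ c) (gp x c y) ≤ δ / 4 by linarith) with hxc | hxy
    · linarith [hrad.sub_le_dist_of_gp_basepoint_le hX hgX hf hl1 hl2 hx hxc,
        mul_nonneg hl2 hδ]
    · linarith [hrad.sub_le_dist_of_gp_le hX hgX hf hl1 hl2 hμ1 hμ2 hxy,
        mul_nonneg (add_nonneg hl1 hl2) (dist_nonneg (x := c) (y := x₀))]
  intro M _ γ hγ s hs t ht
  rcases le_total s t with hst | hts
  · exact key (hγ.1 ▸ hγ.gp_eq_zero ⟨le_rfl, hs.1.trans hs.2⟩ hs ht hs.1 hst)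
  · rw [dist_comm (γ s), dist_comm (f (γ s))]
    exact key (hγ.1 ▸ hγ.gp_eq_zero ⟨le_rfl, ht.1.trans ht.2⟩ ht hs ht.1 hts)

end Radial

section Sampling

variable {Z : Type*} [MetricSpace Z] {p : ℝ → Z} {L a b l c : ℝ}

lemma sub_one_le_abs_min_sub_min {x y : ℝ} (hx : x ≤ L + 1) (hy : y ≤ L + 1) :
    |x - y| - 1 ≤ |min x L - min y L| := by
  rcases le_total x L with h₁ | h₁ <;> rcases le_total y L with h₂ | h₂ <;>
    simp only [min_eq_left, min_eq_right, h₁, h₂, sub_self, abs_zero] <;>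
    cases abs_cases (x - y) <;> cases abs_cases (x - L) <;> cases abs_cases (L - y) <;> linarith

lemma min_cast_mem_Icc (hL : 0 ≤ L) (k : ℕ) : min (k : ℝ) L ∈ Icc 0 L :=
  ⟨le_min k.cast_nonneg hL, min_le_right _ _⟩

lemma isQuasiGeodesicChain_sample (hL : 0 ≤ L) (ha : 0 ≤ a) (hl : 0 ≤ l)
    (hup : ∀ s ∈ Icc 0 L, ∀ t ∈ Icc 0 L, dist (p s) (p t) ≤ a * |s - t| + b)
    (hlow : ∀ s ∈ Icc 0 L, ∀ t ∈ Icc 0 L, l * |s - t| - c ≤ dist (p s) (p t)) :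
    IsQuasiGeodesicChain (fun k : ℕ => p (min (k : ℝ) L)) ⌈L⌉₊ (a + b) l (c + l) where
  dist_succ_le i _ := by
    have h := abs_min_sub_min_le_max (i : ℝ) L ((i + 1 : ℕ) : ℝ) L
    rw [sub_self, abs_zero, Nat.cast_succ, sub_add_cancel_left, abs_neg, abs_one,
      max_eq_left zero_le_one] at h
    have := hup _ (min_cast_mem_Icc hL i) _ (min_cast_mem_Icc hL (i + 1))
    push_cast at this ⊢
    nlinarith
  le_dist i hi j hj := by
    have hceil := Nat.ceil_lt_add_one hL
    have h := sub_one_le_abs_min_sub_min (L := L) (x := i) (y := j)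
      (by linarith [show (i : ℝ) ≤ ⌈L⌉₊ by exact_mod_cast hi])
      (by linarith [show (j : ℝ) ≤ ⌈L⌉₊ by exact_mod_cast hj])
    have := hlow _ (min_cast_mem_Icc hL i) _ (min_cast_mem_Icc hL j)
    nlinarith

lemma dist_sample_floor_le (ha : 0 ≤ a)
    (hup : ∀ s ∈ Icc 0 L, ∀ t ∈ Icc 0 L, dist (p s) (p t) ≤ a * |s - t| + b) {s : ℝ}
    (hs : s ∈ Icc 0 L) : dist (p s) (p (min (⌊s⌋₊ : ℝ) L)) ≤ a + b := by
  have hfloor : (⌊s⌋₊ : ℝ) ≤ s := Nat.floor_le hs.1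
  rw [min_eq_left (hfloor.trans hs.2)]
  have h := hup s hs _ ⟨Nat.cast_nonneg _, hfloor.trans hs.2⟩
  rw [abs_of_nonneg (sub_nonneg.mpr hfloor)] at h
  nlinarith [Nat.lt_floor_add_one s]

end Sampling

theorem stmt7_general {X : Type*} [MetricSpace X] {Y : Type*} [MetricSpace Y]
    (δ : ℝ) (hX : IsDeltaHyperbolic X δ) (hY : IsDeltaHyperbolic Y δ)
    (hgX : IsGeodesicSpace X)
    (f : X → Y) (l1 μ1 l2 μ2 : ℝ) (hl1 : 0 < l1) (hμ1 : 0 < μ1)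
    (hl2 : 0 < l2) (hμ2 : 0 < μ2)
    (hf : IsLSL f l1 μ1) (c : X) (hrad : IsRadialWith f c l2 μ2) :
    ∀ x₀ : X, ∃ H : ℝ, 0 < H ∧
      ∀ L : ℝ, 0 ≤ L → ∀ γ : ℝ → X, IsGeodesicOn γ x₀ L →
        ∀ γ' : ℝ → Y, IsGeodesicOn γ' (f x₀) (dist (f x₀) (f (γ L))) →
          γ' (dist (f x₀) (f (γ L))) = f (γ L) →
          Metric.hausdorffDist (f '' (γ '' Icc (0:ℝ) L))
            (γ' '' Icc (0:ℝ) (dist (f x₀) (f (γ L)))) ≤ H := by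
  intro x₀
  have hδ := hX.nonneg x₀
  have hrad₀ := hrad.change_basepoint hX hgX hf hl1.le hl2.le hμ1.le hμ2.le x₀
  obtain ⟨H, hH, hstab⟩ := hY.exists_chain_geodesic_near (b := l1 + μ1) (l := l2)
    (c := (l1 + l2) * (dist c x₀ + δ) + μ1 + μ2 + l2) (by positivity) hl2 (by positivity)
  refine ⟨l1 + μ1 + H, by positivity, fun L hL γ hγ γ' hγ' hγ'L => ?_⟩
  have hup (s) (hs : s ∈ Icc 0 L) (t) (ht : t ∈ Icc 0 L) :
      dist (f (γ s)) (f (γ t)) ≤ l1 * |s - t| + μ1 := hγ.2 s hs t ht ▸ hf _ _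
  have hchain := isQuasiGeodesicChain_sample (p := fun s => f (γ s)) hL hl1.le hl2.le hup
    fun s hs t ht => hγ.2 s hs t ht ▸ hrad₀ L hL γ hγ s hs t ht
  obtain ⟨hnear, hnear'⟩ := hstab _ _ _ γ' hchain dist_nonneg
    (by simpa [hL, hγ.1] using hγ') (by simpa [Nat.le_ceil L] using hγ'L)
  apply hausdorffDist_le_of_mem_dist (by positivity)
  · rintro _ ⟨_, ⟨s, hs, rfl⟩, rfl⟩
    obtain ⟨t, ht, hst⟩ := hnear' ⌊s⌋₊ ((Nat.floor_le_floor hs.2).trans (Nat.floor_le_ceil L))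
    exact ⟨γ' t, mem_image_of_mem γ' ht, by
      linarith [dist_triangle (f (γ s)) (f (γ (min (⌊s⌋₊ : ℝ) L))) (γ' t),
        dist_sample_floor_le (p := fun s => f (γ s)) hl1.le hup hs]⟩
  · rintro _ ⟨t, ht, rfl⟩
    obtain ⟨k, -, hk⟩ := hnear t ht
    exact ⟨_, mem_image_of_mem f (mem_image_of_mem γ (min_cast_mem_Icc hL k)), by
      linarith⟩

/-- stability of pointed rays: for a large scale Lipschitz radial
function `f` between δ-hyperbolic geodesic spaces and any `x₀`, there is `H` so
that the image under `f` of any geodesic from `x₀` is at Hausdorff distance at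
most `H` from any geodesic in `Y` joining `f(x₀)` to the image of its endpoint. -/
theorem stmt7 {X : Type*} [MetricSpace X] {Y : Type*} [MetricSpace Y]
    (δ : ℝ) (hX : IsDeltaHyperbolic X δ) (hY : IsDeltaHyperbolic Y δ)
    (hgX : IsGeodesicSpace X) (hgY : IsGeodesicSpace Y)
    (f : X → Y) (l1 μ1 l2 μ2 : ℝ) (hl1 : 0 < l1) (hμ1 : 0 < μ1)
    (hl2 : 0 < l2) (hμ2 : 0 < μ2)
    (hf : IsLSL f l1 μ1) (c : X) (hrad : IsRadialWith f c l2 μ2) :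
    ∀ x₀ : X, ∃ H : ℝ, 0 < H ∧
      ∀ L : ℝ, 0 ≤ L → ∀ γ : ℝ → X, IsGeodesicOn γ x₀ L →
        ∀ γ' : ℝ → Y, IsGeodesicOn γ' (f x₀) (dist (f x₀) (f (γ L))) →
          γ' (dist (f x₀) (f (γ L))) = f (γ L) →
          Metric.hausdorffDist (f '' (γ '' Icc (0:ℝ) L))
            (γ' '' Icc (0:ℝ) (dist (f x₀) (f (γ L)))) ≤ H :=
  stmt7_general δ hX hY hgX f l1 μ1 l2 μ2 hl1 hμ1 hl2 hμ2 hf c hrad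

end Gromov
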